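/- Let G = (X, Y, E) be bipartite with |X| = |Y| = n, and let S encode pendant additions as in H(S). If there exists a matching of size n − K in G itself (i.e., ν(H(∅)) ≥ n − K), and W ⊆ X is a set of size K whose pendant graph H(W) has a perfect matching covering Y, then for every set T ⊆ W, H(T) has a matching of size at least n − K + |T|. -/

import Mathlib

variable {X Y : Type*} [DecidableEq X] [DecidableEq Y]

/-- A matching in the bipartite graph with edge set `E`: a subset of edges
that are pairwise vertex-disjoint on both sides. -/
def IsMatching (E m : Finset (X × Y)) : Prop :=
  m ⊆ E ∧ ∀ e ∈ m, ∀ e' ∈ m, e ≠ e' → e.1 ≠ e'.1 ∧ e.2 ≠ e'.2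

/-- The matching `m` covers the vertex `y` on the `Y` side. -/
def CoversY (m : Finset (X × Y)) (y : Y) : Prop := ∃ e ∈ m, e.2 = y

/-- The matching `m` covers the vertex `x` on the `X` side. -/
def CoversX (m : Finset (X × Y)) (x : X) : Prop := ∃ e ∈ m, e.1 = x

/-- Adjacency of the bipartite graph on the vertex type `X ⊕ Y`. -/
def Adj (E : Finset (X × Y)) : X ⊕ Y → X ⊕ Y → Prop
  | .inl x, .inr y => (x, y) ∈ E
  | .inr y, .inl x => (x, y) ∈ E
  | _, _ => False

/-- The (at most one) edge between two vertices of the bipartite graph. -/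
def edgeOf : X ⊕ Y → X ⊕ Y → List (X × Y)
  | .inl x, .inr y => [(x, y)]
  | .inr y, .inl x => [(x, y)]
  | _, _ => []

/-- The list of edges along a path given as a list of vertices. -/
def pathEdges : List (X ⊕ Y) → List (X × Y)
  | a :: b :: rest => edgeOf a b ++ pathEdges (b :: rest)
  | _ => []

/-- A (simple) path in the bipartite graph: consecutive vertices are adjacent,
and no vertex repeats. -/
def IsPath (E : Finset (X × Y)) (p : List (X ⊕ Y)) : Prop :=
  p.Chain' (Adj E) ∧ p.Nodup

/-- A list of edges alternates with respect to the matching `m`. -/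
def Alternates (m : Finset (X × Y)) : List (X × Y) → Prop
  | e1 :: e2 :: rest => (e1 ∈ m ↔ e2 ∉ m) ∧ Alternates m (e2 :: rest)
  | _ => True

/-- The matching `m` covers a vertex of the bipartite graph. -/
def Covers (m : Finset (X × Y)) : X ⊕ Y → Prop
  | .inl x => CoversX m x
  | .inr y => CoversY m y

/-- The maximum matching number of the bipartite graph with edge set `E`. -/
noncomputable def matchNum {A B : Type*} [DecidableEq A] [DecidableEq B]
    (E : Finset (A × B)) : ℕ :=
  sSup {n : ℕ | ∃ m : Finset (A × B), IsMatching E m ∧ m.card = n}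

/-- The auxiliary graph `H(S)`: for each `s ∈ S` a pendant vertex `Sum.inr s` is added
on the `X` side, adjacent only to the designated partner `π s ∈ Y`. -/
def pendantGraph (E : Finset (X × Y)) (π : X → Y) (S : Finset X) :
    Finset ((X ⊕ X) × Y) :=
  E.image (fun e => ((Sum.inl e.1 : X ⊕ X), e.2)) ∪
    S.image (fun s => ((Sum.inr s : X ⊕ X), π s))

/-!
Restrict a matching `m` of `H(W)` covering `Y` to the edges of `H(T)`. Since `m` covers the
`n` vertices of `Y` it has at least `n` edges, and the only edges of `H(W)` missing from `H(T)`
are the `|W \ T| = K - |T|` pendant edges at `W \ T`, so at least `n - (K - |T|) = n - K + |T|`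
edges survive (the truncated subtractions agree because `K = |W| ≤ |X| = n`).
-/

lemma IsMatching.card_le_matchNum {A B : Type*} [DecidableEq A] [DecidableEq B]
    {E m : Finset (A × B)} (hm : IsMatching E m) : m.card ≤ matchNum E :=
  le_csSup ⟨E.card, fun _ ⟨_, hm', h⟩ => h ▸ Finset.card_le_card hm'.1⟩ ⟨m, hm, rfl⟩

lemma IsMatching.inter {E m : Finset (X × Y)} (hm : IsMatching E m) (F : Finset (X × Y)) :
    IsMatching F (m ∩ F) :=
  ⟨Finset.inter_subset_right, fun e he e' he' hne =>
    hm.2 e (Finset.mem_of_mem_inter_left he) e' (Finset.mem_of_mem_inter_left he') hne⟩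

lemma IsMatching.card_le_matchNum_add_card_sdiff {E m : Finset (X × Y)} (hm : IsMatching E m)
    (F : Finset (X × Y)) : m.card ≤ matchNum F + (E \ F).card := by
  calc m.card = (m ∩ F).card + (m \ F).card := (Finset.card_inter_add_card_sdiff m F).symm
    _ ≤ matchNum F + (E \ F).card :=
      add_le_add (hm.inter F).card_le_matchNum
        (Finset.card_le_card (Finset.sdiff_subset_sdiff hm.1 le_rfl))

lemma card_le_card_of_forall_coversY {A B : Type*} [DecidableEq B] [Fintype B]
    {m : Finset (A × B)} (hm : ∀ y, CoversY m y) : Fintype.card B ≤ m.card := by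
  calc Fintype.card B ≤ (m.image Prod.snd).card := by
        refine Finset.card_le_card fun y _ => ?_
        obtain ⟨e, he, rfl⟩ := hm y
        exact Finset.mem_image_of_mem _ he
    _ ≤ m.card := Finset.card_image_le

section pendantGraph

variable (E : Finset (X × Y)) (π : X → Y)

lemma pendantGraph_sdiff_subset (S T : Finset X) :
    pendantGraph E π S \ pendantGraph E π T ⊆
      (S \ T).image fun s => ((Sum.inr s : X ⊕ X), π s) := by
  intro e he
  simp only [pendantGraph, Finset.mem_sdiff, Finset.mem_union, Finset.mem_image] at he ⊢
  grind

lemma card_pendantGraph_sdiff_le (S T : Finset X) :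
    (pendantGraph E π S \ pendantGraph E π T).card ≤ (S \ T).card :=
  (Finset.card_le_card (pendantGraph_sdiff_subset E π S T)).trans Finset.card_image_le

end pendantGraph

theorem subsets_of_dilation_free_set_matching_bound_general
    [Fintype X] [Fintype Y]
    (n K : ℕ) (hX : Fintype.card X = n) (hY : Fintype.card Y = n)
    (E : Finset (X × Y)) (π : X → Y)
    (W : Finset X) (hW : W.card = K)
    (hperf : ∃ m : Finset ((X ⊕ X) × Y),
      IsMatching (pendantGraph E π W) m ∧ ∀ y : Y, CoversY m y) :
    ∀ T : Finset X, T ⊆ W → n - K + T.card ≤ matchNum (pendantGraph E π T) := by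
  intro T hT
  obtain ⟨m, hm, hcov⟩ := hperf
  have hKn : K ≤ n := hW ▸ hX ▸ Finset.card_le_univ W
  have hTK : T.card ≤ K := hW ▸ Finset.card_le_card hT
  have hnm : n ≤ m.card := hY ▸ card_le_card_of_forall_coversY hcov
  have hlost : (pendantGraph E π W \ pendantGraph E π T).card ≤ K - T.card := by
    simpa only [Finset.card_sdiff_of_subset hT, hW] using card_pendantGraph_sdiff_le E π W T
  have hkept := hm.card_le_matchNum_add_card_sdiff (pendantGraph E π T)
  omega

/-- Let `|X| = |Y| = n`. If the base graph has a matching of size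
`n − K` (i.e. `ν(H(∅)) ≥ n − K`) and `W ⊆ X` has size `K` with `H(W)` admitting a
matching covering `Y`, then for every `T ⊆ W`, `H(T)` has a matching of size at least
`n − K + |T|`. -/
theorem subsets_of_dilation_free_set_matching_bound
    [Fintype X] [Fintype Y]
    (n K : ℕ) (hX : Fintype.card X = n) (hY : Fintype.card Y = n)
    (E : Finset (X × Y)) (π : X → Y) (hπ : Function.Injective π)
    (hbase : n - K ≤ matchNum (pendantGraph E π (∅ : Finset X)))
    (W : Finset X) (hW : W.card = K)
    (hperf : ∃ m : Finset ((X ⊕ X) × Y),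
      IsMatching (pendantGraph E π W) m ∧ ∀ y : Y, CoversY m y) :
    ∀ T : Finset X, T ⊆ W → n - K + T.card ≤ matchNum (pendantGraph E π T) :=
  subsets_of_dilation_free_set_matching_bound_general n K hX hY E π W hW hperf
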